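/- For every vector strong subtree (S_1, S_2) of (T_1, T_2) of height k ∈ ω + 1, the valuation tree val(S_1, S_2) is a subtree of S_2 (and hence of T_2) and its height equals k. -/

import Mathlib

open scoped Classical

section AbstractTrees

variable {α : Type*} [PartialOrder α]

/-- The set of strict predecessors of `t` inside `U`. -/
def predsIn (U : Set α) (t : α) : Set α := {s ∈ U | s < t}

/-- The level of a node `t` in the tree `U`: the number of its strict predecessors in `U`. -/
noncomputable def levelIn (U : Set α) (t : α) : ℕ := (predsIn U t).ncard

/-- `U` is a tree: the set of strict predecessors of every node is finite and
linearly ordered. -/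
def IsTreeOn (U : Set α) : Prop :=
  ∀ t ∈ U, (predsIn U t).Finite ∧
    ∀ s₁ ∈ predsIn U t, ∀ s₂ ∈ predsIn U t, s₁ ≤ s₂ ∨ s₂ ≤ s₁

/-- The height of the tree `U`: the least `n` such that `U` has no node of level `n`
(equivalently, for trees, the supremum of `level + 1`), or `ω = ⊤` if there is no such `n`. -/
noncomputable def heightIn (U : Set α) : ℕ∞ :=
  ⨆ t ∈ U, ((levelIn U t : ℕ∞) + 1)

/-- The level set `L_U(D)` of `D` in `U`. -/
def levelSetIn (U D : Set α) : Set ℕ := levelIn U '' D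

/-- `t` is a maximal node of `U`. -/
def IsMaximalIn (U : Set α) (t : α) : Prop := t ∈ U ∧ ∀ s ∈ U, ¬ t < s

/-- `U` is rooted: it has a unique minimal element below all of its nodes. -/
def IsRootedIn (U : Set α) : Prop := ∃ r ∈ U, ∀ t ∈ U, r ≤ t

/-- `U` is balanced: either it has infinite height and no maximal nodes, or all its
maximal nodes lie on level `h(U) - 1`. -/
def IsBalanced (U : Set α) : Prop :=
  (heightIn U = ⊤ ∧ ∀ t, ¬ IsMaximalIn U t) ∨
  (heightIn U ≠ ⊤ ∧ ∀ t, IsMaximalIn U t → ((levelIn U t : ℕ∞) + 1 = heightIn U))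

/-- `m` is the meet `s ∧_U t` of `s` and `t` in `U`. -/
def IsMeetIn (U : Set α) (s t m : α) : Prop :=
  m ∈ U ∧ m ≤ s ∧ m ≤ t ∧ ∀ m' ∈ U, m' ≤ s → m' ≤ t → m' ≤ m

/-- `S` is a subtree of `U`: a subset closed under binary meets (taken in `U`). -/
def IsSubtreeOf (U S : Set α) : Prop :=
  S ⊆ U ∧ ∀ s ∈ S, ∀ t ∈ S, ∃ m ∈ S, IsMeetIn U s t m

/-- `t` is an immediate successor of `s` in `U`. -/
def IsImmSuccIn (U : Set α) (s t : α) : Prop :=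
  s ∈ U ∧ t ∈ U ∧ s < t ∧ ∀ u ∈ U, s < u → ¬ u < t

/-- `U` is finitely branching. -/
def IsFinBranching (U : Set α) : Prop :=
  ∀ t ∈ U, {s | IsImmSuccIn U t s}.Finite

/-- `S` is a strong subtree of `U`: it is a subtree which is either empty, or is
rooted, balanced, has each of its levels contained in a single level of `U`, and for every
non-maximal node `s ∈ S` and every immediate successor `t` of `s` in `U` there is exactly
one immediate successor of `s` in `S` above `t`. -/
def IsStrongSubtreeOf (U S : Set α) : Prop :=
  IsSubtreeOf U S ∧
  (S = ∅ ∨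
    (IsRootedIn S ∧ IsBalanced S ∧
      (∀ s ∈ S, ∀ t ∈ S, levelIn S s = levelIn S t → levelIn U s = levelIn U t) ∧
      (∀ s ∈ S, ¬ IsMaximalIn S s → ∀ t, IsImmSuccIn U s t →
        ∃! c, IsImmSuccIn S s c ∧ t ≤ c)))

end AbstractTrees

/-- A finite `{0,1}`-vector: a function `len → Bool`, represented with total entry
function which vanishes from index `len` on. Nodes of the tree `T₁`. -/
structure Vec where
  len : ℕ
  entry : ℕ → Bool
  outside : ∀ i, len ≤ i → entry i = false

/-- A finite strictly lower triangular square `{0,1}`-matrix: a function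
`size × size → Bool` with `entry i j = 0` for `i ≤ j`, represented with a total entry
function which vanishes outside. Nodes of the tree `T₂`. -/
structure Mat where
  size : ℕ
  entry : ℕ → ℕ → Bool
  lower : ∀ i j, i ≤ j → entry i j = false
  outside : ∀ i j, size ≤ i → entry i j = false

/-- The tree order on `T₁`: end-extension of finite `{0,1}`-vectors. -/
instance : PartialOrder Vec where
  le u v := u.len ≤ v.len ∧ ∀ i, i < u.len → u.entry i = v.entry i
  le_refl u := ⟨le_rfl, fun _ _ => rfl⟩
  le_trans u v w h h' :=
    ⟨h.1.trans h'.1, fun i hi => (h.2 i hi).trans (h'.2 i (lt_of_lt_of_le hi h.1))⟩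
  le_antisymm u v h h' := by
    have hl : u.len = v.len := le_antisymm h.1 h'.1
    have he : u.entry = v.entry := by
      funext i
      by_cases hi : i < u.len
      · exact h.2 i hi
      · rw [u.outside i (not_lt.mp hi), v.outside i (by omega)]
    cases u; cases v
    simp only at hl he
    subst hl; subst he; rfl

/-- The tree order on `T₂`: extension of strictly lower triangular `{0,1}`-matrices. -/
instance : PartialOrder Mat where
  le A B := A.size ≤ B.size ∧ ∀ i j, i < A.size → j < A.size → A.entry i j = B.entry i j
  le_refl A := ⟨le_rfl, fun _ _ _ _ => rfl⟩
  le_trans A B C h h' :=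
    ⟨h.1.trans h'.1, fun i j hi hj => (h.2 i j hi hj).trans
      (h'.2 i j (lt_of_lt_of_le hi h.1) (lt_of_lt_of_le hj h.1))⟩
  le_antisymm A B h h' := by
    have hl : A.size = B.size := le_antisymm h.1 h'.1
    have he : A.entry = B.entry := by
      funext i j
      by_cases hi : i < A.size
      · by_cases hj : j < A.size
        · exact h.2 i j hi hj
        · -- j ≥ A.size and i < A.size, so i < j and both entries vanish
          rw [A.lower i j (by omega), B.lower i j (by omega)]
      · rw [A.outside i j (not_lt.mp hi), B.outside i j (by omega)]
    cases A; cases B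
    simp only at hl he
    subst hl; subst he; rfl

/-- The extension `A⌢v` of an `n × n` matrix `A` by a vector `v` of length `n`:
the `(n+1) × (n+1)` matrix extending `A` whose last row is `v` followed by `0` and whose
last column is zero. -/
def matExtend (A : Mat) (v : Vec) : Mat where
  size := A.size + 1
  entry := fun i j =>
    if i < A.size then A.entry i j
    else if i = A.size ∧ j < A.size then v.entry j else false
  lower := by
    intro i j hij
    by_cases h1 : i < A.size
    · simp only [if_pos h1]
      exact A.lower i j hij
    · show (if i < A.size then A.entry i j
          else if i = A.size ∧ j < A.size then v.entry j else false) = false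
      rw [if_neg h1, if_neg (by omega)]
  outside := by
    intro i j hi
    show (if i < A.size then A.entry i j
        else if i = A.size ∧ j < A.size then v.entry j else false) = false
    rw [if_neg (by omega), if_neg (by omega)]

/-- The `m`-th row of a matrix `A`, as a `{0,1}`-vector of length `|A|`. -/
def rowOf (A : Mat) (m : ℕ) : Vec where
  len := A.size
  entry := fun l => A.entry m l
  outside := by
    intro l hl
    rcases le_or_gt m l with h | h
    · exact A.lower m l h
    · exact A.outside m l (hl.trans h.le)
/-- A 3-uniform hypergraph on a vertex set `V`: a set of hyperedges, each a 3-element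
subset of `V`. -/
structure HGraph (V : Type*) where
  edges : Set (Finset V)
  card_eq : ∀ e ∈ edges, e.card = 3

/-- An embedding of 3-uniform hypergraphs: an injective map `f` between the vertex sets
such that `{x, y, z}` is a hyperedge if and only if `{f x, f y, f z}` is a hyperedge. -/
def IsHGEmbedding {V W : Type*} (A : HGraph V) (B : HGraph W) (f : V → W) : Prop :=
  Function.Injective f ∧
    ∀ x y z : V, ({x, y, z} : Finset V) ∈ A.edges ↔ ({f x, f y, f z} : Finset W) ∈ B.edges

/-- The 3-uniform hypergraph `G`: its vertices are the nodes of the tree `T₂`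
(i.e. finite strictly lower triangular `{0,1}`-matrices), and `{A, B, C}` is a hyperedge
if and only if `|A| < |B| < |C|` and `C_{|B|, |A|} = 1`. -/
noncomputable def Ghyp : HGraph Mat where
  edges := {e | ∃ A B C : Mat, e = {A, B, C} ∧
    A.size < B.size ∧ B.size < C.size ∧ C.entry B.size A.size = true}
  card_eq := by
    rintro e ⟨A, B, C, rfl, h1, h2, -⟩
    refine Finset.card_eq_three.mpr ⟨A, B, C, ?_, ?_, ?_, rfl⟩
    · exact fun h => absurd (congrArg Mat.size h) (by omega)
    · exact fun h => absurd (congrArg Mat.size h) (by omega)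
    · exact fun h => absurd (congrArg Mat.size h) (by omega)

/-- Given a 3-uniform hypergraph `H` on `ℕ`, the matrix `A^i` assigned to the vertex
`i`: the `(2i+1) × (2i+1)` strictly lower triangular `{0,1}`-matrix with
`A^i_{2k+1, 2j} = A^i_{2k+1, 2j+1} = 1` for every hyperedge `{j, k, i}` of `H` with
`j < k < i`, and all other entries `0`. -/
noncomputable def matOf (H : HGraph ℕ) (i : ℕ) : Mat where
  size := 2 * i + 1
  entry := fun r c =>
    if r % 2 = 1 ∧ c / 2 < r / 2 ∧ r / 2 < i ∧ ({c / 2, r / 2, i} : Finset ℕ) ∈ H.edges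
    then true else false
  lower := by
    intro r c hrc
    show (if r % 2 = 1 ∧ c / 2 < r / 2 ∧ r / 2 < i ∧ ({c / 2, r / 2, i} : Finset ℕ) ∈ H.edges
        then true else false) = false
    rw [if_neg]
    rintro ⟨h1, h2, h3, -⟩
    omega
  outside := by
    intro r c hr
    show (if r % 2 = 1 ∧ c / 2 < r / 2 ∧ r / 2 < i ∧ ({c / 2, r / 2, i} : Finset ℕ) ∈ H.edges
        then true else false) = false
    rw [if_neg]
    rintro ⟨h1, h2, h3, -⟩
    omega

/-- The valuation tree `val(S₁, S₂)` corresponding to a vector strong subtree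
`(S₁, S₂)` of `(T₁, T₂)`, as a predicate: the root of `S₂` belongs to it, and whenever
`A` belongs to it, `v ∈ S₁(|A|_{S₂})` and `{C} = ImmSucc_{S₂}(A) ∩ Succ_{T₂}(A⌢v)`,
then `C` belongs to it. -/
inductive InVal (S₁ : Set Vec) (S₂ : Set Mat) : Mat → Prop where
  | root (A : Mat) (hA : A ∈ S₂) (hroot : ∀ B ∈ S₂, A ≤ B) : InVal S₁ S₂ A
  | step (A : Mat) (v : Vec) (C : Mat) (hA : InVal S₁ S₂ A) (hv : v ∈ S₁)
      (hlev : levelIn S₁ v = levelIn S₂ A)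
      (hC : IsImmSuccIn S₂ A C ∧ matExtend A v ≤ C)
      (huniq : ∀ C' : Mat, IsImmSuccIn S₂ A C' ∧ matExtend A v ≤ C' → C' = C) :
      InVal S₁ S₂ C

/-- `(S₁, S₂)` is a vector strong subtree of the vector tree `(T₁, T₂)`:
both coordinates are strong subtrees of the respective (ambient) trees and the pair is
level compatible, i.e. `L_{T₁}(S₁) = L_{T₂}(S₂)`. -/
def IsVecStrongPair (S₁ : Set Vec) (S₂ : Set Mat) : Prop :=
  IsStrongSubtreeOf Set.univ S₁ ∧ IsStrongSubtreeOf Set.univ S₂ ∧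
    levelSetIn Set.univ S₁ = levelSetIn Set.univ S₂

/-- A subset of `T₂` is a valuation tree if it equals `val(S₁, S₂)` for some vector
strong subtree `(S₁, S₂)` of `(T₁, T₂)`. -/
def IsValTree (T : Set Mat) : Prop :=
  ∃ S₁ S₂, IsVecStrongPair S₁ S₂ ∧ T = {C | InVal S₁ S₂ C}

/-- A structural isomorphism between subtrees `T` and `T'` of `T₂`: an isomorphism of
trees preserving relative heights of nodes such that, for all `A, B, C ∈ T` with
`|A| ≤ |B| < |C|`, one has `f(C)_{|f(B)|, |f(A)|} = C_{|B|, |A|}`. -/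
structure IsStructIso (T T' : Set Mat) (f : Mat → Mat) : Prop where
  mapsTo : ∀ A ∈ T, f A ∈ T'
  injOn : ∀ A ∈ T, ∀ B ∈ T, f A = f B → A = B
  surjOn : ∀ C ∈ T', ∃ A ∈ T, f A = C
  orderIso : ∀ A ∈ T, ∀ B ∈ T, (A ≤ B ↔ f A ≤ f B)
  levelEq : ∀ A ∈ T, levelIn T A = levelIn T' (f A)
  passing : ∀ A ∈ T, ∀ B ∈ T, ∀ C ∈ T, A.size ≤ B.size → B.size < C.size →
    (f C).entry (f B).size (f A).size = C.entry B.size A.size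

/-! The valuation tree is downward closed in `S₂`, so it inherits the meets and the levels of `S₂`.
Conversely, every node of it below the top level of `S₂` is not maximal in `S₂` (balancedness), and
extending it by a vector of `S₁` of the same level (which exists because `S₁` and `S₂` have the same
height) yields, by the strong-subtree property of `S₂`, a node of the valuation tree one level up;
so it attains every level of `S₂` and has the same height. -/

section TreeLevels

variable {α : Type*} [PartialOrder α] {U V : Set α} {r s t : α}

lemma le_heightIn (ht : t ∈ U) : (levelIn U t : ℕ∞) + 1 ≤ heightIn U :=
  le_iSup₂ (f := fun t (_ : t ∈ U) => (levelIn U t : ℕ∞) + 1) t ht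

lemma exists_mem_of_lt_heightIn {a : ℕ∞} (h : a < heightIn U) :
    ∃ t ∈ U, a < (levelIn U t : ℕ∞) + 1 := by
  simpa [heightIn, lt_iSup_iff] using h

lemma heightIn_eq_iSup_levelSetIn (U : Set α) :
    heightIn U = ⨆ n ∈ levelSetIn U U, (n : ℕ∞) + 1 :=
  (iSup_image (f := levelIn U) (g := fun n : ℕ => (n : ℕ∞) + 1)).symm

lemma heightIn_congr (h : levelSetIn V V = levelSetIn U U) : heightIn V = heightIn U := by
  rw [heightIn_eq_iSup_levelSetIn, heightIn_eq_iSup_levelSetIn, h]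

lemma levelIn_eq_zero (hr : ∀ t ∈ U, r ≤ t) : levelIn U r = 0 := by
  have : predsIn U r = ∅ :=
    Set.eq_empty_of_forall_notMem fun x hx => (hr x hx.1).not_gt hx.2
  simp [levelIn, this]

lemma levelIn_lt_levelIn (hU : IsTreeOn U) (hs : s ∈ U) (ht : t ∈ U) (h : s < t) :
    levelIn U s < levelIn U t := by
  have hsub : insert s (predsIn U s) ⊆ predsIn U t := by
    rintro x (rfl | hx)
    · exact ⟨hs, h⟩
    · exact ⟨hx.1, hx.2.trans h⟩
  calc levelIn U s < (insert s (predsIn U s)).ncard :=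
        Set.ncard_lt_ncard (Set.ssubset_insert fun hx => hx.2.false) ((hU t ht).1.subset hsub)
    _ ≤ levelIn U t := Set.ncard_le_ncard hsub (hU t ht).1

lemma levelIn_image_predsIn (hU : IsTreeOn U) (ht : t ∈ U) :
    levelIn U '' predsIn U t = Set.Iio (levelIn U t) := by
  have hinj : Set.InjOn (levelIn U) (predsIn U t) := by
    intro a ha b hb hab
    by_contra hne
    rcases (hU t ht).2 a ha b hb with h | h
    · exact (levelIn_lt_levelIn hU ha.1 hb.1 (h.lt_of_ne hne)).ne hab
    · exact (levelIn_lt_levelIn hU hb.1 ha.1 (h.lt_of_ne' hne)).ne' hab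
  have hsub : levelIn U '' predsIn U t ⊆ Set.Iio (levelIn U t) := by
    rintro _ ⟨s, hs, rfl⟩
    exact levelIn_lt_levelIn hU hs.1 ht hs.2
  refine Set.eq_of_subset_of_ncard_le hsub ?_ (Set.finite_Iio _)
  rw [hinj.ncard_image, Set.ncard_Iio_nat, levelIn]

lemma exists_levelIn_eq (hU : IsTreeOn U) {n : ℕ} (h : (n : ℕ∞) < heightIn U) :
    ∃ s ∈ U, levelIn U s = n := by
  obtain ⟨t, ht, hn⟩ := exists_mem_of_lt_heightIn h
  have hn : n < levelIn U t + 1 := by exact_mod_cast hn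
  rcases (Nat.lt_succ_iff.mp hn).eq_or_lt with rfl | hlt
  · exact ⟨t, ht, rfl⟩
  · rw [← Set.mem_Iio, ← levelIn_image_predsIn hU ht] at hlt
    obtain ⟨s, hs, hlev⟩ := hlt
    exact ⟨s, hs.1, hlev⟩

lemma IsImmSuccIn.le_of_lt (hU : IsTreeOn U) (h : IsImmSuccIn U s t) {x : α} (hx : x ∈ U)
    (hxt : x < t) : x ≤ s := by
  obtain ⟨hs, ht, hst, hmin⟩ := h
  rcases (hU t ht).2 x ⟨hx, hxt⟩ s ⟨hs, hst⟩ with h | h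
  · exact h
  · rcases h.eq_or_lt with rfl | h
    · exact le_rfl
    · exact absurd hxt (hmin x hx h)

lemma IsImmSuccIn.levelIn_eq (hU : IsTreeOn U) (h : IsImmSuccIn U s t) :
    levelIn U t = levelIn U s + 1 := by
  have : predsIn U t = insert s (predsIn U s) := by
    ext x
    constructor
    · rintro ⟨hx, hxt⟩
      rcases (h.le_of_lt hU hx hxt).eq_or_lt with rfl | hxs
      · exact Set.mem_insert x _
      · exact Set.mem_insert_of_mem s ⟨hx, hxs⟩
    · rintro (rfl | hx)
      · exact ⟨h.1, h.2.2.1⟩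
      · exact ⟨hx.1, hx.2.trans h.2.2.1⟩
  rw [levelIn, this, Set.ncard_insert_of_notMem (fun hs => hs.2.false) (hU s h.1).1, levelIn]

lemma levelIn_of_downward_closed (hVU : V ⊆ U) (hV : ∀ t ∈ V, ∀ s ∈ U, s < t → s ∈ V)
    (ht : t ∈ V) : levelIn V t = levelIn U t := by
  have : predsIn V t = predsIn U t :=
    Set.ext fun s => ⟨fun hs => ⟨hVU hs.1, hs.2⟩, fun hs => ⟨hV t ht s hs.1 hs.2, hs.2⟩⟩
  rw [levelIn, this, levelIn]

lemma IsBalanced.not_isMaximalIn (hU : IsBalanced U) (h : (levelIn U t : ℕ∞) + 1 < heightIn U) :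
    ¬ IsMaximalIn U t := by
  rcases hU with ⟨-, hnomax⟩ | ⟨-, hmax⟩
  · exact hnomax t
  · exact fun ht => h.ne (hmax t ht)

lemma IsMeetIn.of_isSubtreeOf {S : Set α} {m : α} (hS : IsSubtreeOf U S) (hs : s ∈ S)
    (ht : t ∈ S) (h : IsMeetIn S s t m) : IsMeetIn U s t m := by
  obtain ⟨m', hm'S, -, hm's, hm't, hm'max⟩ := hS.2 s hs t ht
  have : m = m' := le_antisymm (hm'max m (hS.1 h.1) h.2.1 h.2.2.1) (h.2.2.2 m' hm'S hm's hm't)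
  subst this
  exact ⟨hS.1 h.1, h.2.1, h.2.2.1, hm'max⟩

lemma IsSubtreeOf.trans {S : Set α} (hS : IsSubtreeOf U S) (hV : IsSubtreeOf S V) :
    IsSubtreeOf U V := by
  refine ⟨hV.1.trans hS.1, fun s hs t ht => ?_⟩
  obtain ⟨m, hm, hmeet⟩ := hV.2 s hs t ht
  exact ⟨m, hm, hmeet.of_isSubtreeOf hS (hV.1 hs) (hV.1 ht)⟩

end TreeLevels

section Grading

variable {α : Type*} [PartialOrder α] {f : α → ℕ}

lemma strictMono_of_grading (hf : ∀ a b c : α, a ≤ c → b ≤ c → f a ≤ f b → a ≤ b) :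
    StrictMono f :=
  fun a b h => lt_of_not_ge fun hba => h.not_ge (hf b a b le_rfl h.le hba)

lemma isTreeOn_of_grading (hf : ∀ a b c : α, a ≤ c → b ≤ c → f a ≤ f b → a ≤ b)
    (U : Set α) : IsTreeOn U := by
  intro t _
  have hinj : Set.InjOn f {a | a < t} := fun a ha b hb hab =>
    le_antisymm (hf a b t ha.le hb.le hab.le) (hf b a t hb.le ha.le hab.ge)
  have hfin : {a | a < t}.Finite :=
    Set.Finite.of_finite_image ((Set.finite_Iio (f t)).subset <| by
      rintro _ ⟨a, ha, rfl⟩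
      exact strictMono_of_grading hf ha) hinj
  refine ⟨hfin.subset fun a ha => ha.2, fun a ha b hb => ?_⟩
  exact (le_total (f a) (f b)).imp (hf a b t ha.2.le hb.2.le) (hf b a t hb.2.le ha.2.le)

end Grading

lemma Vec.le_of_le_of_len_le {u v w : Vec} (hu : u ≤ w) (hv : v ≤ w) (h : u.len ≤ v.len) :
    u ≤ v :=
  ⟨h, fun i hi => (hu.2 i hi).trans (hv.2 i (hi.trans_le h)).symm⟩

lemma Vec.isTreeOn (U : Set Vec) : IsTreeOn U :=
  isTreeOn_of_grading (fun _ _ _ => Vec.le_of_le_of_len_le) U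

lemma Mat.le_of_le_of_size_le {A B C : Mat} (hA : A ≤ C) (hB : B ≤ C) (h : A.size ≤ B.size) :
    A ≤ B :=
  ⟨h, fun i j hi hj => (hA.2 i j hi hj).trans (hB.2 i j (hi.trans_le h) (hj.trans_le h)).symm⟩

lemma Mat.size_strictMono : StrictMono Mat.size :=
  strictMono_of_grading fun _ _ _ => Mat.le_of_le_of_size_le

lemma Mat.isTreeOn (U : Set Mat) : IsTreeOn U :=
  isTreeOn_of_grading (fun _ _ _ => Mat.le_of_le_of_size_le) U

lemma le_matExtend (A : Mat) (v : Vec) : A ≤ matExtend A v :=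
  ⟨Nat.le_succ _, fun _ _ hi _ => (if_pos hi).symm⟩

lemma isImmSuccIn_matExtend (A : Mat) (v : Vec) :
    IsImmSuccIn Set.univ A (matExtend A v) := by
  have hsize : (matExtend A v).size = A.size + 1 := rfl
  refine ⟨trivial, trivial, (le_matExtend A v).lt_of_ne fun h => ?_, fun u _ hAu huC => ?_⟩
  · have := congrArg Mat.size h
    omega
  · have := Mat.size_strictMono hAu
    have := Mat.size_strictMono huC
    omega

namespace InVal

variable {S₁ : Set Vec} {S₂ : Set Mat} {A B C : Mat}

lemma mem (h : InVal S₁ S₂ C) : C ∈ S₂ := by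
  cases h with
  | root _ hA _ => exact hA
  | step _ _ _ _ _ _ hC _ => exact hC.1.2.1

lemma of_lt (hC : InVal S₁ S₂ C) (hB : B ∈ S₂) (h : B < C) : InVal S₁ S₂ B := by
  induction hC generalizing B with
  | root A _ hroot => exact absurd ((hroot B hB).trans_lt h) (lt_irrefl A)
  | step A _ _ hA _ _ hC _ ih =>
    rcases (hC.1.le_of_lt (Mat.isTreeOn S₂) hB h).eq_or_lt with rfl | hBA
    · exact hA
    · exact ih hB hBA

lemma exists_isMeetIn {C' : Mat} (hC : InVal S₁ S₂ C) (hC' : InVal S₁ S₂ C') :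
    ∃ m, InVal S₁ S₂ m ∧ IsMeetIn S₂ C C' m := by
  induction hC' with
  | root A hA hroot => exact ⟨A, root A hA hroot, hA, hroot C hC.mem, le_rfl, fun _ _ _ h => h⟩
  | step A v C' hA hv hlev hC'A huniq ih =>
    have hself : InVal S₁ S₂ C' := step A v C' hA hv hlev hC'A huniq
    by_cases hCC' : C ≤ C'
    · exact ⟨C, hC, hC.mem, le_rfl, hCC', fun _ _ h _ => h⟩
    by_cases hC'C : C' ≤ C
    · exact ⟨C', hself, hself.mem, hC'C, le_rfl, fun _ _ _ h => h⟩
    -- a common lower bound of `C` and `C'` lies strictly below `C'`, hence below `A`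
    obtain ⟨m, hm, hmS, hmC, hmA, hmmax⟩ := ih
    refine ⟨m, hm, hmS, hmC, hmA.trans hC'A.1.2.2.1.le, fun m' hm' hm'C hm'C' => ?_⟩
    have hlt : m' < C' := hm'C'.lt_of_ne fun h => hC'C (h ▸ hm'C)
    exact hmmax m' hm' hm'C (hC'A.1.le_of_lt (Mat.isTreeOn S₂) hm' hlt)

lemma isSubtreeOf_setOf : IsSubtreeOf S₂ {C | InVal S₁ S₂ C} :=
  ⟨fun _ hC => mem hC, fun _ hs _ ht => exists_isMeetIn hs ht⟩

lemma levelIn_setOf (hC : InVal S₁ S₂ C) : levelIn {C | InVal S₁ S₂ C} C = levelIn S₂ C :=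
  levelIn_of_downward_closed (fun _ hC => mem hC) (fun _ hC _ hB h => of_lt hC hB h) hC

lemma exists_isImmSuccIn (hS₂ : IsStrongSubtreeOf Set.univ S₂) (hA : InVal S₁ S₂ A)
    (hmax : ¬ IsMaximalIn S₂ A) {v : Vec} (hv : v ∈ S₁) (hlev : levelIn S₁ v = levelIn S₂ A) :
    ∃ C, InVal S₁ S₂ C ∧ IsImmSuccIn S₂ A C := by
  rcases hS₂.2 with h0 | ⟨-, -, -, hsucc⟩
  · exact absurd (h0 ▸ hA.mem) (Set.notMem_empty A)
  obtain ⟨C, hC, huniq⟩ := hsucc A hA.mem hmax _ (isImmSuccIn_matExtend A v)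
  exact ⟨C, step A v C hA hv hlev hC huniq, hC.1⟩

lemma exists_levelIn_eq (hS₂ : IsStrongSubtreeOf Set.univ S₂) (h : heightIn S₂ ≤ heightIn S₁)
    (n : ℕ) (hn : (n : ℕ∞) < heightIn S₂) : ∃ C, InVal S₁ S₂ C ∧ levelIn S₂ C = n := by
  induction n with
  | zero =>
    obtain ⟨t, ht, -⟩ := exists_mem_of_lt_heightIn hn
    rcases hS₂.2 with h0 | ⟨⟨r, hr, hroot⟩, -⟩
    · exact absurd (h0 ▸ ht) (Set.notMem_empty t)
    · exact ⟨r, root r hr hroot, levelIn_eq_zero hroot⟩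
  | succ n ih =>
    have hn' : (n : ℕ∞) < heightIn S₂ := lt_of_le_of_lt (by simp) hn
    obtain ⟨A, hA, hlev⟩ := ih hn'
    rcases hS₂.2 with h0 | ⟨-, hbal, -⟩
    · exact absurd (h0 ▸ hA.mem) (Set.notMem_empty A)
    have hmax : ¬ IsMaximalIn S₂ A := hbal.not_isMaximalIn (by rw [hlev]; exact_mod_cast hn)
    obtain ⟨v, hv, hvlev⟩ :=
      _root_.exists_levelIn_eq (Vec.isTreeOn S₁) (hn'.trans_le h)
    obtain ⟨C, hC, hAC⟩ := exists_isImmSuccIn hS₂ hA hmax hv (hvlev.trans hlev.symm)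
    exact ⟨C, hC, by rw [hAC.levelIn_eq (Mat.isTreeOn S₂), hlev]⟩

lemma levelSetIn_setOf (hS₂ : IsStrongSubtreeOf Set.univ S₂) (h : heightIn S₂ ≤ heightIn S₁) :
    levelSetIn {C | InVal S₁ S₂ C} {C | InVal S₁ S₂ C} = levelSetIn S₂ S₂ := by
  ext n
  constructor
  · rintro ⟨C, hC, rfl⟩
    exact ⟨C, mem hC, (levelIn_setOf hC).symm⟩
  · rintro ⟨t, ht, rfl⟩
    have hlt : (levelIn S₂ t : ℕ∞) < heightIn S₂ :=
      lt_of_lt_of_le (by exact_mod_cast Nat.lt_succ_self _) (le_heightIn ht)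
    obtain ⟨C, hC, hlev⟩ := exists_levelIn_eq hS₂ h _ hlt
    exact ⟨C, hC, (levelIn_setOf hC).trans hlev⟩

end InVal

/-- For every vector strong subtree `(S₁, S₂)` of `(T₁, T₂)` of height `k ∈ ω + 1`, the
valuation tree `val(S₁, S₂)` is a subtree of `S₂` (hence of `T₂`) of height `k`. -/
theorem valuation_tree_is_subtree_of_height (k : ℕ∞) (S₁ : Set Vec) (S₂ : Set Mat)
    (hpair : IsVecStrongPair S₁ S₂) (h1 : heightIn S₁ = k) (h2 : heightIn S₂ = k) :
    IsSubtreeOf S₂ {C | InVal S₁ S₂ C} ∧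
    IsSubtreeOf (Set.univ : Set Mat) {C | InVal S₁ S₂ C} ∧
    heightIn {C | InVal S₁ S₂ C} = k := by
  have hS₂ : IsStrongSubtreeOf Set.univ S₂ := hpair.2.1
  have hval : IsSubtreeOf S₂ {C | InVal S₁ S₂ C} := InVal.isSubtreeOf_setOf
  refine ⟨hval, hS₂.1.trans hval, ?_⟩
  rw [heightIn_congr (InVal.levelSetIn_setOf hS₂ (h2.trans h1.symm).le), h2]
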